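/- arXiv:2401.04594 — 2 statements merged into one kernel-verified Lean document; each statement's English description precedes it below -/
import Mathlib

section
/- Derivability of the strongest postcondition: for every program C and outcome assertion φ, the triple ⟨φ⟩C⟨Post(C,φ)⟩ is derivable in the Outcome Logic proof system, i.e. Ω ⊢ ⟨φ⟩C⟨Post(C,φ)⟩, where Post(C,φ) = { ⟦C⟧†(m) | m ∈ φ } is the strongest postcondition of C with respect to φ. -/
open scoped Classical

universe u v

/-- A semiring that is simultaneously a complete lattice with bottom `0`, whose order
coincides with the natural (additive) order, and in which addition and multiplication
are Scott-continuous. -/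
class OLSemiring (U : Type u) extends Semiring U, CompleteLattice U where
  bot_eq_zero : (⊥ : U) = 0
  le_iff_exists_add : ∀ a b : U, a ≤ b ↔ ∃ c, a + c = b
  add_scott : ∀ (D : Set U), D.Nonempty → DirectedOn (· ≤ ·) D → ∀ y : U,
    sSup ((fun x => x + y) '' D) = sSup D + y
  mul_scott_right : ∀ (D : Set U), D.Nonempty → DirectedOn (· ≤ ·) D → ∀ y : U,
    sSup ((fun x => x * y) '' D) = sSup D * y
  mul_scott_left : ∀ (D : Set U), D.Nonempty → DirectedOn (· ≤ ·) D → ∀ y : U,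
    sSup ((fun x => y * x) '' D) = y * sSup D

variable {U : Type u} [OLSemiring U]

/-- Infinite sum: supremum over finite subfamilies of finite sums. -/
noncomputable def wsum {I : Type v} (f : I → U) : U :=
  ⨆ J : Finset I, ∑ i ∈ J, f i

/-- The unit of the weighting monad. -/
noncomputable def eta {X : Type u} (x : X) : X → U :=
  fun y => if y = x then 1 else 0

/-- Kleisli extension: `kext f m y = ∑_{x ∈ supp m} m x * f x y`. -/
noncomputable def kext {X Y : Type u} (f : X → Y → U) (m : X → U) : Y → U :=
  fun y => wsum (fun x : Function.support m => m x.1 * f x.1 y)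

/-- Syntax of tests over primitive tests indexed by `TI`. -/
inductive TestExpr (TI : Type u) : Type u where
  | prim (t : TI)
  | tt
  | ff
  | and (b₁ b₂ : TestExpr TI)
  | or (b₁ b₂ : TestExpr TI)
  | not (b : TestExpr TI)

/-- The set of states at which a test is true. -/
def testSet {St TI : Type u} (tsem : TI → Set St) : TestExpr TI → Set St
  | .prim t => tsem t
  | .tt => Set.univ
  | .ff => ∅
  | .and b₁ b₂ => testSet tsem b₁ ∩ testSet tsem b₂
  | .or b₁ b₂ => testSet tsem b₁ ∪ testSet tsem b₂
  | .not b => (testSet tsem b)ᶜ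

/-- Expressions: a test or a weight. -/
inductive Expr (U : Type u) (TI : Type u) : Type u where
  | test (b : TestExpr TI)
  | wt (u : U)

/-- Evaluation of expressions into weights. -/
noncomputable def eeval {St TI : Type u} (tsem : TI → Set St) : Expr U TI → St → U
  | .test b => fun σ => if σ ∈ testSet tsem b then 1 else 0
  | .wt u => fun _ => u

/-- Programs. -/
inductive Prog (U St TI Act : Type u) : Type u where
  | skip
  | seq (C₁ C₂ : Prog U St TI Act)
  | choice (C₁ C₂ : Prog U St TI Act)
  | assume (e : Expr U TI)
  | iter (C : Prog U St TI Act) (e e' : Expr U TI)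
  | act (a : Act)

/-- The characteristic function of iteration. -/
noncomputable def Phi {St : Type u} (w w' : St → U) (g : St → St → U)
    (f : St → St → U) : St → St → U :=
  fun σ τ => w σ * kext f (g σ) τ + w' σ * eta σ τ

/-- Denotational semantics of programs. -/
noncomputable def sem {St TI Act : Type u} (tsem : TI → Set St)
    (asem : Act → St → St → U) : Prog U St TI Act → St → St → U
  | .skip => fun σ => eta σ
  | .seq C₁ C₂ => fun σ => kext (sem tsem asem C₂) (sem tsem asem C₁ σ)
  | .choice C₁ C₂ => fun σ τ => sem tsem asem C₁ σ τ + sem tsem asem C₂ σ τ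
  | .assume e => fun σ τ => eeval tsem e σ * eta σ τ
  | .iter C e e' =>
      ⨆ n : ℕ, (Phi (eeval tsem e) (eeval tsem e') (sem tsem asem C))^[n] (fun _ _ => 0)
  | .act a => asem a

/-- Outcome assertions. -/
abbrev OA (U : Type u) (St : Type u) := Set (St → U)

/-- Binary outcome conjunction. -/
def oplus {St : Type u} (φ ψ : OA U St) : OA U St :=
  { m | ∃ m₁ ∈ φ, ∃ m₂ ∈ ψ, m = fun σ => m₁ σ + m₂ σ }

/-- Indexed outcome conjunction. -/
noncomputable def bigOplus {St T : Type u} (φ : T → OA U St) : OA U St :=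
  { m | ∃ f : T → St → U, (∀ t, f t ∈ φ t) ∧ m = fun σ => wsum (fun t => f t σ) }

/-- Right scaling of an assertion by a weight. -/
def odotR {St : Type u} (φ : OA U St) (u : U) : OA U St :=
  { m' | ∃ m ∈ φ, m' = fun σ => m σ * u }

/-- Left scaling of an assertion by a weight. -/
def odotL {St : Type u} (u : U) (φ : OA U St) : OA U St :=
  { m' | ∃ m ∈ φ, m' = fun σ => u * m σ }

/-- `φ ⊨ e = u` : the expression `e` evaluates to `u` on the support of every `m ∈ φ`. -/
def entailsEq {St TI : Type u} (tsem : TI → Set St) (φ : OA U St)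
    (e : Expr U TI) (u : U) : Prop :=
  ∀ m ∈ φ, ∀ σ, m σ ≠ 0 → eeval tsem e σ = u

/-- Semantic validity of an outcome triple. -/
def valid {St TI Act : Type u} (tsem : TI → Set St) (asem : Act → St → St → U)
    (φ : OA U St) (C : Prog U St TI Act) (ψ : OA U St) : Prop :=
  ∀ m ∈ φ, kext (sem tsem asem C) m ∈ ψ

/-- The family `ψ` of assertions converges to `ψlim`. -/
def convergesTo {St : Type u} (ψ : ℕ → OA U St) (ψlim : OA U St) : Prop :=
  ∀ ms : ℕ → St → U, (∀ n, ms n ∈ ψ n) → (fun σ => wsum (fun n => ms n σ)) ∈ ψlim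

/-- The Outcome Logic proof system (with oracle axioms for valid atomic triples). -/
inductive Deriv {St TI Act : Type u} (tsem : TI → Set St) (asem : Act → St → St → U) :
    OA U St → Prog U St TI Act → OA U St → Prop where
  | atom {φ ψ} (a : Act) :
      valid tsem asem φ (.act a) ψ → Deriv tsem asem φ (.act a) ψ
  | skip (φ) : Deriv tsem asem φ .skip φ
  | seq {φ ϑ ψ C₁ C₂} :
      Deriv tsem asem φ C₁ ϑ → Deriv tsem asem ϑ C₂ ψ →
      Deriv tsem asem φ (.seq C₁ C₂) ψ
  | plus {φ ψ₁ ψ₂ C₁ C₂} :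
      Deriv tsem asem φ C₁ ψ₁ → Deriv tsem asem φ C₂ ψ₂ →
      Deriv tsem asem φ (.choice C₁ C₂) (oplus ψ₁ ψ₂)
  | assume {φ e u} :
      entailsEq tsem φ e u → Deriv tsem asem φ (.assume e) (odotR φ u)
  | iter {C e e'} (φn ψn : ℕ → OA U St) (ψlim : OA U St) :
      convergesTo ψn ψlim →
      (∀ n, Deriv tsem asem (φn n) (.seq (.assume e) C) (φn (n + 1))) →
      (∀ n, Deriv tsem asem (φn n) (.assume e') (ψn n)) →
      Deriv tsem asem (φn 0) (.iter C e e') ψlim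
  | false (C φ) : Deriv tsem asem ∅ C φ
  | true (C φ) : Deriv tsem asem φ C Set.univ
  | scale {φ ψ C} (u : U) :
      Deriv tsem asem φ C ψ → Deriv tsem asem (odotL u φ) C (odotL u ψ)
  | disj {φ₁ φ₂ ψ₁ ψ₂ C} :
      Deriv tsem asem φ₁ C ψ₁ → Deriv tsem asem φ₂ C ψ₂ →
      Deriv tsem asem (φ₁ ∪ φ₂) C (ψ₁ ∪ ψ₂)
  | conj {φ₁ φ₂ ψ₁ ψ₂ C} :
      Deriv tsem asem φ₁ C ψ₁ → Deriv tsem asem φ₂ C ψ₂ →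
      Deriv tsem asem (φ₁ ∩ φ₂) C (ψ₁ ∩ ψ₂)
  | choice {T : Type u} {C} (φ φ' : T → OA U St) :
      (∀ t, Deriv tsem asem (φ t) C (φ' t)) →
      Deriv tsem asem (bigOplus φ) C (bigOplus φ')
  | exists_ {T : Type u} {C} (φ φ' : T → OA U St) :
      (∀ t, Deriv tsem asem (φ t) C (φ' t)) →
      Deriv tsem asem (⋃ t, φ t) C (⋃ t, φ' t)
  | conseq {φ φ' ψ ψ' C} :
      φ' ⊆ φ → Deriv tsem asem φ C ψ → ψ ⊆ ψ' →
      Deriv tsem asem φ' C ψ'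

/-- The strongest postcondition `Post(C,φ) = { ⟦C⟧†(m) | m ∈ φ }`. -/
def spost {U St TI Act : Type u} [OLSemiring U] (tsem : TI → Set St)
    (asem : Act → St → St → U) (C : Prog U St TI Act) (φ : OA U St) : OA U St :=
  { m' | ∃ m ∈ φ, m' = kext (sem tsem asem C) m }

/-!
An assertion `φ` is the union of the singletons `{m}` with `m ∈ φ`, so by the Exists rule it
suffices to derive `⟨{m}⟩ C ⟨{⟦C⟧†m}⟩`, by induction on `C`. Skip, sequencing and choice follow
from the monad laws of the Kleisli extension. For `assume e`, the weighting function `m` is split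
into its point masses, on each of which `e` is constant, and the Choice rule reassembles them.
For `iter(C, e, e')` the Iter rule is applied to the singleton families `{sⁿ m}` and
`{sⁿ m · e'}`, where `s m = ⟦C⟧†(m · e)`: by Scott continuity `⟦iter(C, e, e')⟧†m = ∑ₙ sⁿ m · e'`.
-/

namespace OLSemiring

instance : IsOrderedAddMonoid U where
  add_le_add_left a b hab c := by
    obtain ⟨d, rfl⟩ := (le_iff_exists_add a b).1 hab
    exact (le_iff_exists_add _ _).2 ⟨d, (add_right_comm a d c).symm⟩

instance : CanonicallyOrderedAdd U where
  exists_add_of_le h := ((le_iff_exists_add _ _).1 h).imp fun _ hc => hc.symm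
  le_add_self a b := (le_iff_exists_add _ _).2 ⟨b, add_comm a b⟩
  le_self_add _ b := (le_iff_exists_add _ _).2 ⟨b, rfl⟩

variable {ι : Sort*} [Nonempty ι] {a b : ι → U}

theorem iSup_add_of_directed (ha : Directed (· ≤ ·) a) (y : U) :
    ⨆ i, (a i + y) = (⨆ i, a i) + y := by
  have h := add_scott _ (Set.range_nonempty a) ha.directedOn_range y
  rwa [← Set.range_comp] at h

theorem add_iSup_of_directed (ha : Directed (· ≤ ·) a) (y : U) :
    ⨆ i, (y + a i) = y + ⨆ i, a i := by
  simpa only [add_comm y] using iSup_add_of_directed ha y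

theorem iSup_mul_of_directed (ha : Directed (· ≤ ·) a) (y : U) :
    ⨆ i, (a i * y) = (⨆ i, a i) * y := by
  have h := mul_scott_right _ (Set.range_nonempty a) ha.directedOn_range y
  rwa [← Set.range_comp] at h

theorem mul_iSup_of_directed (ha : Directed (· ≤ ·) a) (y : U) :
    ⨆ i, (y * a i) = y * ⨆ i, a i := by
  have h := mul_scott_left _ (Set.range_nonempty a) ha.directedOn_range y
  rwa [← Set.range_comp] at h

theorem iSup_add_iSup_of_directed (h : Directed (· ≤ ·) fun i => (a i, b i)) :
    ⨆ i, (a i + b i) = (⨆ i, a i) + ⨆ i, b i := by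
  have ha : Directed (· ≤ ·) a := h.mono_comp _ (g := Prod.fst) fun _ _ => And.left
  have hb : Directed (· ≤ ·) b := h.mono_comp _ (g := Prod.snd) fun _ _ => And.right
  refine le_antisymm (iSup_le fun i => add_le_add (le_iSup a i) (le_iSup b i)) ?_
  rw [← iSup_add_of_directed ha]
  refine iSup_le fun i => ?_
  rw [← add_iSup_of_directed hb]
  refine iSup_le fun j => ?_
  obtain ⟨k, hik, hjk⟩ := h i j
  exact (add_le_add hik.1 hjk.2).trans (le_iSup (fun k => a k + b k) k)

theorem sum_iSup_of_directed {K : Type*} (A : Finset K) {h : ι → K → U}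
    (hd : Directed (· ≤ ·) h) : ∑ x ∈ A, ⨆ i, h i x = ⨆ i, ∑ x ∈ A, h i x := by
  induction A using Finset.induction_on with
  | empty => simp
  | insert x A hx ih =>
    simp only [Finset.sum_insert hx, ih]
    have hd' : Directed (· ≤ ·) fun i => (h i x, ∑ y ∈ A, h i y) :=
      hd.mono_comp _ (g := fun f : K → U => (f x, ∑ y ∈ A, f y))
        fun _ _ hfg => ⟨hfg x, Finset.sum_le_sum fun y _ => hfg y⟩
    exact (iSup_add_iSup_of_directed hd').symm

end OLSemiring

open OLSemiring

section WeightedSum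

variable {I J : Type v}

theorem sum_le_wsum (f : I → U) (A : Finset I) : ∑ i ∈ A, f i ≤ wsum f :=
  le_iSup (fun A : Finset I => ∑ i ∈ A, f i) A

theorem wsum_le {f : I → U} {u : U} (h : ∀ A : Finset I, ∑ i ∈ A, f i ≤ u) : wsum f ≤ u :=
  iSup_le h

theorem wsum_mono {f g : I → U} (h : f ≤ g) : wsum f ≤ wsum g :=
  iSup_mono fun _ => Finset.sum_le_sum fun i _ => h i

theorem wsum_add (f g : I → U) : wsum (fun i => f i + g i) = wsum f + wsum g := by
  simp only [wsum, Finset.sum_add_distrib]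
  exact iSup_add_iSup_of_directed (Monotone.directed_le fun _ _ hAB =>
    ⟨Finset.sum_mono_set f hAB, Finset.sum_mono_set g hAB⟩)

theorem wsum_mul (f : I → U) (u : U) : wsum (fun i => f i * u) = wsum f * u := by
  simp only [wsum, ← Finset.sum_mul]
  exact iSup_mul_of_directed (Finset.sum_mono_set f).directed_le u

theorem mul_wsum (f : I → U) (u : U) : wsum (fun i => u * f i) = u * wsum f := by
  simp only [wsum, ← Finset.mul_sum]
  exact mul_iSup_of_directed (Finset.sum_mono_set f).directed_le u

theorem wsum_eq_single {f : I → U} (i₀ : I) (h : ∀ i, i ≠ i₀ → f i = 0) : wsum f = f i₀ := by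
  refine le_antisymm (wsum_le fun A => ?_) (by simpa using sum_le_wsum f {i₀})
  calc ∑ i ∈ A, f i ≤ ∑ i ∈ insert i₀ A, f i := Finset.sum_mono_set f (Finset.subset_insert _ _)
    _ = f i₀ := Finset.sum_eq_single_of_mem i₀ (Finset.mem_insert_self _ _) fun i _ => h i

theorem wsum_subtype_eq {f : I → U} (s : Set I) (hf : ∀ i ∉ s, f i = 0) :
    wsum (fun i : s => f i) = wsum f := by
  refine le_antisymm (wsum_le fun A => ?_) (wsum_le fun A => ?_)
  · exact (Finset.sum_map A (Function.Embedding.subtype _) f).symm.le.trans (sum_le_wsum f _)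
  · rw [← Finset.sum_filter_of_ne (p := (· ∈ s)) fun i _ hi => not_imp_comm.1 (hf i) hi,
      ← Finset.sum_subtype_eq_sum_filter]
    exact sum_le_wsum (fun i : s => f i) _

theorem wsum_iSup_of_directed {ι : Sort*} [Nonempty ι] {h : ι → I → U}
    (hd : Directed (· ≤ ·) h) : wsum (fun x => ⨆ i, h i x) = ⨆ i, wsum (h i) := by
  simp only [wsum, sum_iSup_of_directed _ hd]
  exact iSup_comm

theorem wsum_wsum_eq_iSup (h : I → J → U) :
    wsum (fun i => wsum (h i)) = ⨆ (A : Finset I) (B : Finset J), ∑ i ∈ A, ∑ j ∈ B, h i j := by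
  simp only [wsum]
  exact iSup_congr fun A => sum_iSup_of_directed A (h := fun B i => ∑ j ∈ B, h i j)
    (Monotone.directed_le fun _ _ hBC i => Finset.sum_mono_set (h i) hBC)

theorem wsum_comm (h : I → J → U) :
    wsum (fun i => wsum (h i)) = wsum (fun j => wsum fun i => h i j) := by
  rw [wsum_wsum_eq_iSup, wsum_wsum_eq_iSup, iSup_comm]
  simp only [Finset.sum_comm (s := (_ : Finset I))]

theorem wsum_eq_iSup_sum_range (f : ℕ → U) : wsum f = ⨆ n, ∑ k ∈ Finset.range n, f k := by
  refine le_antisymm (wsum_le fun A => ?_) (iSup_le fun n => sum_le_wsum f _)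
  refine (Finset.sum_le_sum_of_subset fun k hk => ?_).trans
    (le_iSup (fun n => ∑ k ∈ Finset.range n, f k) (A.sup id + 1))
  exact Finset.mem_range.2 (Nat.lt_succ_of_le (Finset.le_sup (f := id) hk))

end WeightedSum

section Kleisli

variable {X Y Z : Type u}

theorem kext_apply (f : X → Y → U) (m : X → U) (y : Y) :
    kext f m y = wsum fun x => m x * f x y :=
  wsum_subtype_eq (f := fun x => m x * f x y) _ fun x hx => by
    simp [Function.notMem_support.1 hx]

theorem kext_eta (m : X → U) : kext eta m = m := by
  funext y
  rw [kext_apply, wsum_eq_single y fun x hx => by simp [eta, Ne.symm hx]]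
  simp [eta]

theorem kext_kext (g : Y → Z → U) (f : X → Y → U) (m : X → U) :
    kext g (kext f m) = kext (fun x => kext g (f x)) m := by
  funext z
  simp only [kext_apply, ← wsum_mul, ← mul_wsum, mul_assoc]
  exact wsum_comm _

theorem kext_add (f g : X → Y → U) (m : X → U) :
    kext (fun x y => f x y + g x y) m = fun y => kext f m y + kext g m y := by
  funext y
  simp only [kext_apply, mul_add, wsum_add]

theorem kext_weight (w : X → U) (f : X → Y → U) (m : X → U) :
    kext (fun x y => w x * f x y) m = kext f fun x => m x * w x := by
  funext y
  simp only [kext_apply, mul_assoc]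

theorem kext_mono {f f' : X → Y → U} (h : f ≤ f') (m : X → U) : kext f m ≤ kext f' m :=
  fun y => by
    simp only [kext_apply]
    exact wsum_mono fun x => mul_le_mul_right (h x y) _

theorem kext_iSup_of_directed {ι : Sort*} [Nonempty ι] {F : ι → X → Y → U}
    (hF : Directed (· ≤ ·) F) (m : X → U) : kext (⨆ i, F i) m = ⨆ i, kext (F i) m := by
  funext y
  simp only [kext_apply, iSup_apply]
  rw [← wsum_iSup_of_directed (h := fun i x => m x * F i x y)
    (hF.mono_comp _ (g := fun f x => m x * f x y) fun _ _ hFG x => mul_le_mul_right (hFG x y) _)]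
  congr 1
  funext x
  exact (mul_iSup_of_directed (hF.mono_comp _ (g := fun f => f x y) fun _ _ hFG => hFG x y) _).symm

end Kleisli

section Iteration

variable {St : Type u} (w w' : St → U) (g : St → St → U)

noncomputable def iterStep (m : St → U) : St → U :=
  kext g fun σ => m σ * w σ

theorem kext_Phi (f : St → St → U) (m : St → U) :
    kext (Phi w w' g f) m = fun τ => kext f (iterStep w g m) τ + m τ * w' τ := by
  unfold Phi
  rw [kext_add, kext_weight, kext_weight, ← kext_kext, kext_eta]
  rfl

theorem monotone_Phi : Monotone (Phi w w' g) := fun _ _ hf σ τ =>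
  add_le_add_left (mul_le_mul_right (kext_mono hf (g σ) τ) _) _

theorem kext_Phi_iterate (n : ℕ) (m : St → U) :
    kext ((Phi w w' g)^[n] fun _ _ => 0) m =
      fun τ => ∑ k ∈ Finset.range n, (iterStep w g)^[k] m τ * w' τ := by
  induction n generalizing m with
  | zero =>
    funext τ
    simp [kext_apply, wsum]
  | succ n ih =>
    funext τ
    rw [Function.iterate_succ_apply', kext_Phi, ih, Finset.sum_range_succ']
    rfl

theorem kext_iSup_Phi_iterate (m : St → U) :
    kext (⨆ n, (Phi w w' g)^[n] fun _ _ => 0) m =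
      fun τ => wsum fun n => (iterStep w g)^[n] m τ * w' τ := by
  have hmono := (monotone_Phi w w' g).monotone_iterate_of_le_map fun _ _ => zero_le
  rw [kext_iSup_of_directed hmono.directed_le]
  funext τ
  simp only [iSup_apply, kext_Phi_iterate, wsum_eq_iSup_sum_range]

end Iteration

section Derivations

variable {St TI Act : Type u} (tsem : TI → Set St) (asem : Act → St → St → U)

theorem oplus_singleton (m₁ m₂ : St → U) :
    oplus {m₁} {m₂} = ({fun σ => m₁ σ + m₂ σ} : OA U St) := by
  ext m
  simp [oplus]

theorem convergesTo_singleton (ms : ℕ → St → U) :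
    convergesTo (fun n => {ms n}) {fun σ => wsum fun n => ms n σ} := by
  intro ms' hms'
  rw [funext fun n => Set.mem_singleton_iff.1 (hms' n)]
  rfl

theorem Deriv.singleton_assume (e : Expr U TI) (m : St → U) :
    Deriv tsem asem {m} (.assume e) {fun σ => m σ * eeval tsem e σ} := by
  let point : St → St → U := fun σ τ => if τ = σ then m σ else 0
  have hsum : ∀ (v : St → U) τ, (wsum fun σ => point σ τ * v σ) = m τ * v τ := fun v τ =>
    (wsum_eq_single τ fun σ hσ => by simp [point, Ne.symm hσ]).trans (by simp [point])
  have hpoint : ∀ σ, Deriv tsem asem {point σ} (.assume e) (odotR {point σ} (eeval tsem e σ)) :=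
    fun σ => Deriv.assume fun _ hm τ hτ => by
      rw [Set.mem_singleton_iff.1 hm] at hτ
      by_cases h : τ = σ
      · rw [h]
      · simp [point, h] at hτ
  refine Deriv.conseq ?_ (Deriv.choice _ _ hpoint) ?_
  · rintro _ rfl
    exact ⟨point, fun σ => rfl, funext fun τ => by simpa using (hsum 1 τ).symm⟩
  · rintro _ ⟨f, hf, rfl⟩
    have hf' : f = fun σ τ => point σ τ * eeval tsem e σ := funext fun σ => by
      obtain ⟨_, rfl, h⟩ := hf σ
      exact h
    subst hf'
    exact funext fun τ => hsum _ τ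

theorem Deriv.singleton_iter {C : Prog U St TI Act} (e e' : Expr U TI)
    (ih : ∀ m, Deriv tsem asem {m} C {kext (sem tsem asem C) m}) (m : St → U) :
    Deriv tsem asem {m} (.iter C e e') {kext (sem tsem asem (.iter C e e')) m} := by
  let s := iterStep (eeval tsem e) (sem tsem asem C)
  have hbody : ∀ n, Deriv tsem asem {s^[n] m} (.seq (.assume e) C) {s^[n + 1] m} := fun n => by
    rw [Function.iterate_succ_apply']
    exact Deriv.seq (Deriv.singleton_assume tsem asem e _) (ih _)
  rw [sem, kext_iSup_Phi_iterate]
  exact Deriv.iter (fun n => {s^[n] m}) _ _ (convergesTo_singleton _) hbody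
    fun n => Deriv.singleton_assume tsem asem e' _

theorem Deriv.singleton (C : Prog U St TI Act) (m : St → U) :
    Deriv tsem asem {m} C {kext (sem tsem asem C) m} := by
  induction C generalizing m with
  | skip =>
    rw [sem, kext_eta]
    exact Deriv.skip _
  | seq C₁ C₂ ih₁ ih₂ =>
    rw [sem, ← kext_kext]
    exact Deriv.seq (ih₁ m) (ih₂ _)
  | choice C₁ C₂ ih₁ ih₂ =>
    rw [sem, kext_add, ← oplus_singleton]
    exact Deriv.plus (ih₁ m) (ih₂ m)
  | assume e =>
    rw [sem, kext_weight, kext_eta]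
    exact Deriv.singleton_assume tsem asem e m
  | iter C e e' ih => exact Deriv.singleton_iter tsem asem e e' ih m
  | act a => exact Deriv.atom a fun _ hm => hm ▸ rfl

end Derivations

/-- **Derivability of the strongest postcondition**: `Ω ⊢ ⟨φ⟩C⟨Post(C,φ)⟩`. -/
theorem spost_derivable {U St TI Act : Type u} [OLSemiring U]
    (tsem : TI → Set St) (asem : Act → St → St → U)
    (C : Prog U St TI Act) (φ : OA U St) :
    Deriv tsem asem φ C (spost tsem asem C φ) := by
  have h := Deriv.exists_ (fun m : φ => {m.1}) (fun m : φ => {kext (sem tsem asem C) m.1})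
    fun m => Deriv.singleton tsem asem C m.1
  refine Deriv.conseq (fun m hm => Set.mem_iUnion.2 ⟨⟨m, hm⟩, rfl⟩) h ?_
  intro _ hpost
  obtain ⟨⟨m, hm⟩, rfl⟩ := Set.mem_iUnion.1 hpost
  exact ⟨m, hm, rfl⟩
end

section
/- Lifting the diamond modality (nondeterministic instance): for every f : Σ → Set Σ and P, Q ⊆ Σ, if the triple ⟨⌈P⌉⟩f⟨◇Q⟩ is valid (f†(S) ∈ ◇Q for every S ∈ ⌈P⌉), then the triple ⟨◇P⟩f⟨◇Q⟩ is valid: for every S : Set Σ with S ∩ P nonempty, (⋃_{σ∈S} f(σ)) ∩ Q is nonempty. -/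
/-- Kleisli extension in the powerset (nondeterministic) instance: `f†(S) = ⋃_{σ∈S} f σ`. -/
def kextP {St : Type*} (f : St → Set St) (S : Set St) : Set St :=
  ⋃ σ ∈ S, f σ

/-- `⌈P⌉` : the outcome assertion `{S | S nonempty and S ⊆ P}`. -/
def ceil {St : Type*} (P : Set St) : Set (Set St) :=
  { S | S.Nonempty ∧ S ⊆ P }

/-- `◻Q` : the outcome assertion `{S | S ⊆ Q}`. -/
def boxA {St : Type*} (Q : Set St) : Set (Set St) :=
  { S | S ⊆ Q }

/-- `◇Q` : the outcome assertion `{S | S ∩ Q nonempty}`. -/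
def diaA {St : Type*} (Q : Set St) : Set (Set St) :=
  { S | (S ∩ Q).Nonempty }

/-- Semantic validity of an outcome triple in the powerset instance. -/
def validP {St : Type*} (φ : Set (Set St)) (f : St → Set St) (ψ : Set (Set St)) : Prop :=
  ∀ S ∈ φ, kextP f S ∈ ψ

section Kleisli

variable {St : Type*}

theorem kextP_singleton (f : St → Set St) (σ : St) : kextP f {σ} = f σ :=
  Set.biUnion_singleton σ f

theorem subset_kextP (f : St → Set St) {S : Set St} {σ : St} (hσ : σ ∈ S) : f σ ⊆ kextP f S :=
  Set.subset_biUnion_of_mem (u := f) hσ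

-- Both sides are witnessed by single states: `{σ} ∈ ⌈P⌉` for `σ ∈ P`, and `f σ ⊆ f†(S)` for `σ ∈ S`.
theorem validP_ceil_diaA_iff {f : St → Set St} {P Q : Set St} :
    validP (ceil P) f (diaA Q) ↔ ∀ σ ∈ P, (f σ ∩ Q).Nonempty := by
  constructor
  · intro h σ hσ
    have hσ' := h {σ} ⟨Set.singleton_nonempty σ, Set.singleton_subset_iff.2 hσ⟩
    rwa [kextP_singleton] at hσ'
  · rintro h S ⟨⟨σ, hσS⟩, hSP⟩
    exact (h σ (hSP hσS)).mono (Set.inter_subset_inter_left Q (subset_kextP f hσS))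

end Kleisli

/-- **Lifting the diamond modality**: if `⊨ ⟨⌈P⌉⟩f⟨◇Q⟩` then `⊨ ⟨◇P⟩f⟨◇Q⟩`:
for every `S` with `S ∩ P` nonempty, `(⋃_{σ∈S} f σ) ∩ Q` is nonempty. -/
theorem lift_diamond {St : Type*} (f : St → Set St) (P Q : Set St)
    (h : validP (ceil P) f (diaA Q)) :
    ∀ S : Set St, (S ∩ P).Nonempty → (((⋃ σ ∈ S, f σ)) ∩ Q).Nonempty := by
  rintro S ⟨σ, hσS, hσP⟩
  obtain ⟨y, hyf, hyQ⟩ := validP_ceil_diaA_iff.1 h σ hσP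
  exact ⟨y, subset_kextP f hσS hyf, hyQ⟩
end
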